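/- Let f(n, k) denote the number of words in [k]^n avoiding the generalized pattern 12-3. Then for every integer k ≥ 1, the identity (∑_{n ≥ 0} f(n, k)·x^n) · ∏_{j=0}^{k-1} ((1 - x)^j - x) = (1 - x)^(k(k-1)/2) holds as an identity of formal power series over ℚ. -/

import Mathlib

open PowerSeries

/-- The `i`-th letter (1-based value in `{1,…,k}`) of a word `w ∈ [k]^n`,
with value `0` outside the word. -/
def letter {n k : ℕ} (w : Fin n → Fin k) (i : ℕ) : ℕ :=
  if h : i < n then (w ⟨i, h⟩ : ℕ) + 1 else 0

/-- `w` avoids the generalized pattern 12-3: there are no 0-based indices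
`i, j` with `i + 2 ≤ j < n` such that `w i < w (i+1) < w j`. -/
def Avoids12d3 {n k : ℕ} (w : Fin n → Fin k) : Prop :=
  ∀ i j : ℕ, i + 2 ≤ j → j < n →
    ¬ (letter w i < letter w (i + 1) ∧ letter w (i + 1) < letter w j)

/-- The number of words in `[k]^n` avoiding 12-3. -/
noncomputable def f (n k : ℕ) : ℕ := Nat.card {w : Fin n → Fin k // Avoids12d3 w}


/-!
Split a word over `[k+1]` at its first letter `k+1`. The prefix is a word over `[k]`, and since
`k+1` exceeds every letter, the whole word avoids 12-3 exactly when the prefix is weakly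
decreasing and the suffix, an arbitrary word over `[k+1]`, avoids 12-3. Weakly decreasing words
over `[k]` have generating function `(1-x)^(-k)`, so the generating functions `F_k` of `f (·, k)`
satisfy `F_{k+1} = F_k + x F_{k+1} / (1-x)^k`, that is
`F_{k+1} ((1-x)^k - x) = F_k (1-x)^k`, and the product formula follows by induction on `k`.
-/

section Letters

variable {n k : ℕ}

lemma letter_of_lt (w : Fin n → Fin k) {i : ℕ} (h : i < n) :
    letter w i = (w ⟨i, h⟩ : ℕ) + 1 :=
  dif_pos h

lemma letter_of_le (w : Fin n → Fin k) {i : ℕ} (h : n ≤ i) : letter w i = 0 :=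
  dif_neg (by omega)

lemma letter_le (w : Fin n → Fin k) (i : ℕ) : letter w i ≤ k := by
  unfold letter
  split
  · exact (w _).2
  · exact Nat.zero_le _

lemma letter_injective : Function.Injective (letter : (Fin n → Fin k) → ℕ → ℕ) := by
  intro w w' h
  funext i
  have hi := congrFun h i
  rw [letter_of_lt w i.2, letter_of_lt w' i.2] at hi
  exact Fin.ext (by simpa using hi)

lemma letter_castSucc_comp (w : Fin n → Fin k) : letter (Fin.castSucc ∘ w) = letter w := by
  funext i
  unfold letter
  split <;> simp

lemma letter_cons_zero (a : Fin k) (v : Fin n → Fin k) :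
    letter (Fin.cons a v : Fin (n + 1) → Fin k) 0 = (a : ℕ) + 1 :=
  letter_of_lt _ n.succ_pos

lemma letter_cons_succ (a : Fin k) (v : Fin n → Fin k) (i : ℕ) :
    letter (Fin.cons a v : Fin (n + 1) → Fin k) (i + 1) = letter v i := by
  by_cases hi : i < n
  · rw [letter_of_lt _ (by omega), letter_of_lt v hi]
    rfl
  · rw [letter_of_le _ (by omega), letter_of_le v (by omega)]

lemma antitone_iff_letter_succ_le (w : Fin n → Fin k) :
    Antitone w ↔ ∀ i, i + 1 < n → letter w (i + 1) ≤ letter w i := by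
  cases n with
  | zero => simp [Subsingleton.antitone]
  | succ n =>
    rw [Fin.antitone_iff_succ_le]
    refine ⟨fun h i hi => ?_, fun h i => ?_⟩
    · rw [letter_of_lt w hi, letter_of_lt w (by omega)]
      exact Nat.add_le_add_right (h ⟨i, by omega⟩) 1
    · have hi := h i (by omega)
      rw [letter_of_lt w (by omega), letter_of_lt w (by omega)] at hi
      exact Fin.le_iff_val_le_val.2 (Nat.le_of_add_le_add_right hi)

lemma antitone_castSucc_comp_iff {w : Fin n → Fin k} :
    Antitone (Fin.castSucc ∘ w) ↔ Antitone w := by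
  rw [antitone_iff_letter_succ_le, antitone_iff_letter_succ_le, letter_castSucc_comp]

lemma antitone_cons_last_iff {v : Fin n → Fin (k + 1)} :
    Antitone (Fin.cons (Fin.last k) v : Fin (n + 1) → Fin (k + 1)) ↔ Antitone v := by
  rw [antitone_iff_letter_succ_le, antitone_iff_letter_succ_le]
  refine ⟨fun h i hi => ?_, fun h i hi => ?_⟩
  · simpa only [letter_cons_succ] using h (i + 1) (by omega)
  · cases i with
    | zero =>
      rw [letter_cons_succ, letter_cons_zero, Fin.val_last]
      exact letter_le v 0
    | succ i =>
      rw [letter_cons_succ, letter_cons_succ]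
      exact h i (by omega)

end Letters

def Avoids12d3Seq (L : ℕ → ℕ) : Prop :=
  ∀ i j, i + 2 ≤ j → ¬ (L i < L (i + 1) ∧ L (i + 1) < L j)

lemma avoids12d3_iff_letter {n k : ℕ} (w : Fin n → Fin k) :
    Avoids12d3 w ↔ Avoids12d3Seq (letter w) := by
  refine ⟨fun h i j hij hpat => ?_, fun h i j hij _ => h i j hij⟩
  by_cases hj : j < n
  · exact h i j hij hj hpat
  · rw [letter_of_le w (not_lt.1 hj)] at hpat
    omega

lemma avoids12d3_castSucc_comp_iff {n k : ℕ} {w : Fin n → Fin k} :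
    Avoids12d3 (Fin.castSucc ∘ w) ↔ Avoids12d3 w := by
  rw [avoids12d3_iff_letter, avoids12d3_iff_letter, letter_castSucc_comp]

theorem avoids12d3Seq_iff_of_firstMax {L : ℕ → ℕ} {p : ℕ} (hlt : ∀ i < p, L i < L p)
    (hle : ∀ j, L j ≤ L p) :
    Avoids12d3Seq L ↔
      (∀ i, i + 1 < p → L (i + 1) ≤ L i) ∧ Avoids12d3Seq (fun i => L (p + 1 + i)) := by
  constructor
  · intro h
    refine ⟨fun i hi => ?_, fun i j hij => ?_⟩
    · by_contra! hrise
      exact h i p (by omega) ⟨hrise, hlt _ hi⟩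
    · simpa only [Nat.add_assoc] using h (p + 1 + i) (p + 1 + j) (by omega)
  · rintro ⟨hpre, hsuf⟩ i j hij ⟨hij1, hij2⟩
    by_cases hbefore : i + 1 < p
    · exact absurd hij1 (not_lt.2 (hpre i hbefore))
    by_cases hmid : i + 1 = p
    · exact absurd hij2 (not_lt.2 (hmid ▸ hle j))
    by_cases hfirst : i = p
    · exact absurd hij1 (not_lt.2 (hfirst ▸ hle (i + 1)))
    obtain ⟨a, rfl⟩ : ∃ a, i = p + 1 + a := ⟨i - p - 1, by omega⟩
    obtain ⟨b, rfl⟩ : ∃ b, j = p + 1 + b := ⟨j - p - 1, by omega⟩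
    exact hsuf a b (by omega) ⟨hij1, hij2⟩

section Splice

variable {n k : ℕ}

/-- The word `u (k+1) v` of length `n`, with `k+1` at position `p`. -/
def splice (p : Fin n) (u : Fin p → Fin k) (v : Fin (n - 1 - p) → Fin (k + 1)) :
    Fin n → Fin (k + 1) :=
  fun i =>
    if h : (i : ℕ) < p then (u ⟨i, h⟩).castSucc
    else if h' : (i : ℕ) = p then Fin.last k
    else v ⟨i - p - 1, by have := i.2; omega⟩

variable (p : Fin n) (u : Fin p → Fin k) (v : Fin (n - 1 - p) → Fin (k + 1))

lemma letter_splice_of_lt {i : ℕ} (h : i < p) : letter (splice p u v) i = letter u i := by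
  rw [letter_of_lt _ (h.trans p.2), letter_of_lt u h]
  simp [splice, h]

lemma letter_splice_self : letter (splice p u v) p = k + 1 := by
  rw [letter_of_lt _ p.2]
  simp [splice]

lemma letter_splice_add (j : ℕ) : letter (splice p u v) (p + 1 + j) = letter v j := by
  by_cases hj : j < n - 1 - p
  · rw [letter_of_lt _ (by omega), letter_of_lt v hj]
    simp only [splice, dif_neg (show ¬ (p : ℕ) + 1 + j < p by omega),
      dif_neg (show (p : ℕ) + 1 + j ≠ p by omega)]
    exact congrArg (fun x => (v x : ℕ) + 1) (Fin.ext (by dsimp only; omega))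
  · rw [letter_of_le _ (by omega), letter_of_le v (by omega)]

lemma avoids12d3_splice_iff : Avoids12d3 (splice p u v) ↔ Antitone u ∧ Avoids12d3 v := by
  have hmax := letter_splice_self p u v
  rw [avoids12d3_iff_letter, avoids12d3Seq_iff_of_firstMax (p := p), antitone_iff_letter_succ_le,
    avoids12d3_iff_letter]
  · simp only [letter_splice_add]
    refine and_congr_left' (forall₂_congr fun i hi => ?_)
    rw [letter_splice_of_lt p u v hi, letter_splice_of_lt p u v (by omega)]
  · intro i hi
    rw [letter_splice_of_lt p u v hi, hmax]
    exact Nat.lt_succ_of_le (letter_le u i)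
  · intro j
    rw [hmax]
    exact letter_le _ j

lemma castSucc_comp_ne_splice (a : Fin n → Fin k) : Fin.castSucc ∘ a ≠ splice p u v := by
  intro h
  have hp := congrArg (letter · p) h
  simp only [letter_castSucc_comp, letter_splice_self] at hp
  have := letter_le a p
  omega

variable {p u v}

lemma le_of_letter_splice_eq {p' : Fin n} {u' : Fin p' → Fin k}
    {v' : Fin (n - 1 - p') → Fin (k + 1)} (h : letter (splice p u v) = letter (splice p' u' v')) :
    p ≤ p' := by
  by_contra! hlt
  have hp' := congrFun h p'
  rw [letter_splice_of_lt p u v hlt, letter_splice_self] at hp'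
  have := letter_le u p'
  omega

end Splice

lemma splice_injective {n k : ℕ} :
    Function.Injective
      fun x : Σ p : Fin n, (Fin p → Fin k) × (Fin (n - 1 - p) → Fin (k + 1)) =>
        splice x.1 x.2.1 x.2.2 := by
  rintro ⟨p, u, v⟩ ⟨p', u', v'⟩ h
  replace h := congrArg letter h
  obtain rfl : p = p' :=
    le_antisymm (le_of_letter_splice_eq h) (le_of_letter_splice_eq h.symm)
  have hu : u = u' := letter_injective <| funext fun i => by
    by_cases hi : i < p
    · simpa only [letter_splice_of_lt p _ _ hi] using congrFun h i
    · rw [letter_of_le u (not_lt.1 hi), letter_of_le u' (not_lt.1 hi)]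
  have hv : v = v' := letter_injective <| funext fun j => by
    simpa only [letter_splice_add] using congrFun h (p + 1 + j)
  rw [hu, hv]

lemma exists_castSucc_comp_or_splice {n k : ℕ} (w : Fin n → Fin (k + 1)) :
    (∃ a : Fin n → Fin k, Fin.castSucc ∘ a = w) ∨
      ∃ (p : Fin n) (u : Fin p → Fin k) (v : Fin (n - 1 - p) → Fin (k + 1)),
        splice p u v = w := by
  by_cases hlast : ∃ i, w i = Fin.last k
  · right
    obtain ⟨p, hp, hbefore⟩ : ∃ p, w p = Fin.last k ∧ ∀ i < p, w i ≠ Fin.last k :=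
      ⟨_, Fin.find_spec hlast, fun _ => Fin.find_min hlast⟩
    refine ⟨p, fun i => (w ⟨i, i.2.trans p.2⟩).castPred (hbefore _ i.2),
      fun j => w ⟨p + 1 + j, by omega⟩, funext fun i => ?_⟩
    simp only [splice]
    split_ifs with h₁ h₂
    · exact Fin.castSucc_castPred _ _
    · rw [← hp]
      exact congrArg w (Fin.ext h₂.symm)
    · exact congrArg w (Fin.ext (by dsimp only; omega))
  · left
    push Not at hlast
    exact ⟨fun i => (w i).castPred (hlast i), funext fun i => Fin.castSucc_castPred _ _⟩

section Counting

variable {n k : ℕ}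

abbrev AntitoneWord (n k : ℕ) : Type := {u : Fin n → Fin k // Antitone u}

abbrev AvoidingWord (n k : ℕ) : Type := {w : Fin n → Fin k // Avoids12d3 w}

noncomputable def numAntitone (n k : ℕ) : ℕ := Nat.card (AntitoneWord n k)

lemma card_subtype_fin_zero {α : Type*} {P : (Fin 0 → α) → Prop} (h : ∀ w, P w) :
    Nat.card {w // P w} = 1 := by
  rw [Nat.card_congr (Equiv.subtypeUnivEquiv h)]
  exact Nat.card_unique

lemma numAntitone_zero_left (k : ℕ) : numAntitone 0 k = 1 :=
  card_subtype_fin_zero fun _ => Subsingleton.antitone _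

def consLastMap : AntitoneWord (n + 1) k ⊕ AntitoneWord n (k + 1) → AntitoneWord (n + 1) (k + 1)
  | .inl u => ⟨Fin.castSucc ∘ u.1, antitone_castSucc_comp_iff.2 u.2⟩
  | .inr v => ⟨Fin.cons (Fin.last k) v.1, antitone_cons_last_iff.2 v.2⟩

lemma consLastMap_bijective : Function.Bijective (consLastMap (n := n) (k := k)) := by
  refine ⟨?_, fun ⟨u, hu⟩ => ?_⟩
  · rintro (a | a) (b | b) h <;> simp only [consLastMap, Subtype.mk.injEq] at h
    · exact congrArg _ (Subtype.ext ((Fin.castSucc_injective k).comp_left h))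
    · exact absurd (congrFun h 0) (Fin.castSucc_lt_last _).ne
    · exact absurd (congrFun h 0).symm (Fin.castSucc_lt_last _).ne
    · exact congrArg _ (Subtype.ext (Fin.cons_right_injective _ h))
  by_cases h0 : u 0 = Fin.last k
  · have hcons : Fin.cons (Fin.last k) (Fin.tail u) = u := h0 ▸ Fin.cons_self_tail u
    refine ⟨.inr ⟨Fin.tail u, antitone_cons_last_iff.1 (hcons ▸ hu)⟩, Subtype.ext hcons⟩
  · have hlt : ∀ i, u i ≠ Fin.last k := fun i =>
      ((hu (Fin.zero_le i)).trans_lt (Fin.lt_last_iff_ne_last.2 h0)).ne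
    have hcast : Fin.castSucc ∘ (fun i => (u i).castPred (hlt i)) = u :=
      funext fun i => Fin.castSucc_castPred _ _
    refine ⟨.inl ⟨fun i => (u i).castPred (hlt i), ?_⟩, Subtype.ext hcast⟩
    rwa [← antitone_castSucc_comp_iff, hcast]

lemma numAntitone_succ_succ (n k : ℕ) :
    numAntitone (n + 1) (k + 1) = numAntitone (n + 1) k + numAntitone n (k + 1) := by
  rw [numAntitone, ← Nat.card_congr (Equiv.ofBijective _ consLastMap_bijective), Nat.card_sum]
  rfl

def spliceMap :
    AvoidingWord n k ⊕ (Σ p : Fin n, AntitoneWord p k × AvoidingWord (n - 1 - p) (k + 1)) →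
      AvoidingWord n (k + 1)
  | .inl w => ⟨Fin.castSucc ∘ w.1, avoids12d3_castSucc_comp_iff.2 w.2⟩
  | .inr ⟨p, u, v⟩ => ⟨splice p u.1 v.1, (avoids12d3_splice_iff p u.1 v.1).2 ⟨u.2, v.2⟩⟩

lemma spliceMap_bijective : Function.Bijective (spliceMap (n := n) (k := k)) := by
  refine ⟨?_, fun ⟨w, hw⟩ => ?_⟩
  · rintro (a | ⟨p, u, v⟩) (b | ⟨q, u', v'⟩) h <;>
      simp only [spliceMap, Subtype.mk.injEq] at h
    · exact congrArg _ (Subtype.ext ((Fin.castSucc_injective k).comp_left h))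
    · exact absurd h (castSucc_comp_ne_splice _ _ _ _)
    · exact absurd h.symm (castSucc_comp_ne_splice _ _ _ _)
    · obtain ⟨rfl, huv⟩ := Sigma.mk.inj_iff.1
        (splice_injective (a₁ := ⟨p, u.1, v.1⟩) (a₂ := ⟨q, u'.1, v'.1⟩) h)
      obtain ⟨hu, hv⟩ := Prod.mk.inj (eq_of_heq huv)
      rw [Subtype.ext hu, Subtype.ext hv]
  rcases exists_castSucc_comp_or_splice w with ⟨a, rfl⟩ | ⟨p, u, v, rfl⟩
  · exact ⟨.inl ⟨a, avoids12d3_castSucc_comp_iff.1 hw⟩, rfl⟩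
  · obtain ⟨hu, hv⟩ := (avoids12d3_splice_iff p u v).1 hw
    exact ⟨.inr ⟨p, ⟨u, hu⟩, ⟨v, hv⟩⟩, rfl⟩

lemma f_succ_right (n k : ℕ) :
    f n (k + 1) = f n k + ∑ p ∈ Finset.range n, numAntitone p k * f (n - 1 - p) (k + 1) := by
  rw [f, ← Nat.card_congr (Equiv.ofBijective _ spliceMap_bijective), Nat.card_sum,
    Nat.card_sigma, ← Fin.sum_univ_eq_sum_range]
  simp only [Nat.card_prod]
  rfl

end Counting

lemma mk_card_fin_zero_eq_one {P : ∀ n, (Fin n → Fin 0) → Prop} (h : ∀ w, P 0 w) :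
    (mk fun n => (Nat.card {w // P n w} : ℚ)) = 1 := by
  ext (_ | n)
  · simp [card_subtype_fin_zero h]
  · simp [coeff_one]

lemma mk_numAntitone_succ_right (k : ℕ) :
    (mk fun n => (numAntitone n (k + 1) : ℚ)) =
      (mk fun n => (numAntitone n k : ℚ)) + X * mk fun n => (numAntitone n (k + 1) : ℚ) := by
  ext (_ | n)
  · simp [numAntitone_zero_left]
  · simp [coeff_succ_X_mul, numAntitone_succ_succ]

lemma mk_numAntitone_mul_one_sub_pow (k : ℕ) :
    (mk fun n => (numAntitone n k : ℚ)) * (1 - X) ^ k = 1 := by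
  induction k with
  | zero =>
    simpa [numAntitone] using
      mk_card_fin_zero_eq_one (P := fun _ u => Antitone u) Subsingleton.antitone
  | succ k ih =>
    linear_combination (1 - X) ^ k * mk_numAntitone_succ_right k + ih

lemma mk_f_succ_right (k : ℕ) :
    (mk fun n => (f n (k + 1) : ℚ)) =
      (mk fun n => (f n k : ℚ)) +
        X * ((mk fun n => (numAntitone n k : ℚ)) * mk fun n => (f n (k + 1) : ℚ)) := by
  ext (_ | n)
  · simpa using f_succ_right 0 k
  · rw [map_add, coeff_succ_X_mul, coeff_mul, Finset.Nat.sum_antidiagonal_eq_sum_range_succ_mk]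
    simp [f_succ_right (n + 1) k]

lemma mk_f_zero_right : (mk fun n => (f n 0 : ℚ)) = 1 :=
  mk_card_fin_zero_eq_one (P := fun _ w => Avoids12d3 w) fun _ _ _ _ hj =>
    absurd hj (Nat.not_lt_zero _)

lemma mk_f_mul_succ_right (k : ℕ) :
    (mk fun n => (f n (k + 1) : ℚ)) * ((1 - X) ^ k - X) =
      (mk fun n => (f n k : ℚ)) * (1 - X) ^ k := by
  linear_combination (1 - X) ^ k * mk_f_succ_right k +
    X * (mk fun n => (f n (k + 1) : ℚ)) * mk_numAntitone_mul_one_sub_pow k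

theorem stmt10_general (k : ℕ) :
    (PowerSeries.mk fun n => (f n k : ℚ)) *
        ∏ j ∈ Finset.range k, ((1 - X) ^ j - X) =
      (1 - X : PowerSeries ℚ) ^ (k * (k - 1) / 2) := by
  induction k with
  | zero => simp [mk_f_zero_right]
  | succ k ih =>
    rw [Finset.prod_range_succ, Nat.triangle_succ, pow_add, ← ih]
    linear_combination (∏ j ∈ Finset.range k, ((1 - X) ^ j - X)) * mk_f_mul_succ_right k

theorem stmt10 (k : ℕ) (hk : 1 ≤ k) :
    (PowerSeries.mk fun n => (f n k : ℚ)) *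
        ∏ j ∈ Finset.range k, ((1 - X) ^ j - X) =
      (1 - X : PowerSeries ℚ) ^ (k * (k - 1) / 2) :=
  stmt10_general k
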